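/- Let G be a biconnected loopless multigraph which is not isomorphic to K_2. Then the Kirchhoff polynomial Ψ_G is irreducible over Q and is non-constant in every edge variable. -/

import Mathlib

/-- A multigraph: each edge `e` has endpoints `fst e` and `snd e`. -/
structure Multigraph (V : Type) (E : Type) where
  fst : E → V
  snd : E → V

namespace Multigraph

variable {V E V' E' W : Type}

/-- Adjacency using only edges in the set `S`. -/
def Adj (G : Multigraph V E) (S : Set E) (u v : V) : Prop :=
  ∃ e ∈ S, (G.fst e = u ∧ G.snd e = v) ∨ (G.fst e = v ∧ G.snd e = u)

/-- All vertices are connected using edges from `S`. -/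
def ConnOn (G : Multigraph V E) (S : Set E) : Prop :=
  ∀ u v : V, Relation.ReflTransGen (G.Adj S) u v

/-- The multigraph is connected. -/
def ConnectedGraph (G : Multigraph V E) : Prop := G.ConnOn Set.univ

/-- A spanning tree: a minimally spanning-connected edge set. -/
def IsSpanningTree (G : Multigraph V E) [DecidableEq E] (T : Finset E) : Prop :=
  G.ConnOn ↑T ∧ ∀ e ∈ T, ¬ G.ConnOn ↑(T.erase e)

open Classical in
/-- The Kirchhoff polynomial `Ψ_G = ∑_{T spanning tree} ∏_{e ∉ T} t_e`. -/
noncomputable def kirchhoff (G : Multigraph V E) [Fintype E] [DecidableEq E] :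
    MvPolynomial E ℚ :=
  ∑ T : Finset E, if G.IsSpanningTree T then ∏ e ∈ Tᶜ, MvPolynomial.X e else 0

/-- Deletion of the edge `e`. -/
def delete (G : Multigraph V E) (e : E) : Multigraph V {e' : E // e' ≠ e} :=
  ⟨fun e' => G.fst e'.1, fun e' => G.snd e'.1⟩

/-- Contraction of the edge `e` (its two endpoints get identified). -/
def contract (G : Multigraph V E) (e : E) :
    Multigraph (Quot fun a b : V => a = G.fst e ∧ b = G.snd e) {e' : E // e' ≠ e} :=
  ⟨fun e' => Quot.mk _ (G.fst e'.1), fun e' => Quot.mk _ (G.snd e'.1)⟩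

/-- Identify the two vertices `a` and `b`. -/
def identify (G : Multigraph V E) (a b : V) :
    Multigraph (Quot fun x y : V => x = a ∧ y = b) E :=
  ⟨fun e => Quot.mk _ (G.fst e), fun e => Quot.mk _ (G.snd e)⟩

/-- A self-loop. -/
def IsLoop (G : Multigraph V E) (e : E) : Prop := G.fst e = G.snd e

/-- A bridge: deleting `e` disconnects the graph. -/
def IsBridge (G : Multigraph V E) (e : E) : Prop := ¬ G.ConnOn {e' | e' ≠ e}

/-- The whole graph is a tree (its full edge set is a spanning tree). -/
def IsTreeGraph (G : Multigraph V E) [Fintype E] [DecidableEq E] : Prop := G.IsSpanningTree Finset.univ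

/-- A regular edge: not a bridge, not a self-loop, and deleting it does not leave a tree. -/
def IsRegular (G : Multigraph V E) [Fintype E] [DecidableEq E] (e : E) : Prop :=
  ¬ G.IsBridge e ∧ ¬ G.IsLoop e ∧ ¬ (G.delete e).IsTreeGraph

/-- The Jacobian ideal of a polynomial: the ideal generated by its partial derivatives. -/
noncomputable def jacobianIdeal {σ : Type} (f : MvPolynomial σ ℚ) :
    Ideal (MvPolynomial σ ℚ) :=
  Ideal.span (Set.range fun i : σ => MvPolynomial.pderiv i f)

/-- Aluffi's Condition 1 for the pair `(G, e)`: `Ψ_G` lies in the Jacobian ideal of `Ψ_{G∖e}`. -/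
def Cond1 (G : Multigraph V E) [Fintype E] [DecidableEq E] (e : E) : Prop :=
  G.kirchhoff ∈
    jacobianIdeal (MvPolynomial.rename (Subtype.val : {e' : E // e' ≠ e} → E)
      (G.delete e).kirchhoff)

end Multigraph

namespace Multigraph

variable {V E : Type}

/-- Biconnected: connected and removing any single vertex keeps it connected. -/
def Biconnected (G : Multigraph V E) : Prop :=
  G.ConnectedGraph ∧ ∀ v u w : V, u ≠ v → w ≠ v →
    Relation.ReflTransGen (fun a b => a ≠ v ∧ b ≠ v ∧ G.Adj Set.univ a b) u w

/-- The subgraph induced by an edge set `B`, on the vertices met by `B`. -/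
def restrict (G : Multigraph V E) (B : Finset E) :
    Multigraph {v : V // ∃ e ∈ B, G.fst e = v ∨ G.snd e = v} {e : E // e ∈ B} :=
  ⟨fun e => ⟨G.fst e.1, e.1, e.2, Or.inl rfl⟩, fun e => ⟨G.snd e.1, e.1, e.2, Or.inr rfl⟩⟩

/-- A block (biconnected component): a maximal nonempty edge set inducing a
biconnected subgraph. -/
def IsBlock (G : Multigraph V E) (B : Finset E) : Prop :=
  B.Nonempty ∧ (G.restrict B).Biconnected ∧
    ∀ B' : Finset E, B ⊆ B' → (G.restrict B').Biconnected → B' = B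

/-- The set of vertices met by an edge set `S`. -/
def vsupp (G : Multigraph V E) (S : Set E) : Set V :=
  {v : V | ∃ e ∈ S, G.fst e = v ∨ G.snd e = v}

end Multigraph

/-!
`Ψ_G` is multilinear, with one monomial `∏_{e ∉ T} t_e` for each spanning tree `T`. If a
multilinear polynomial is a product of two non-units, the factors involve disjoint nonempty sets
of variables `A` and `Aᶜ`, so its support is closed under combining the `A`-part of one
monomial with the `Aᶜ`-part of another. In a connected graph some vertex `v` meets an edge
`a ∈ A` and an edge `b ∉ A`. Biconnectivity makes `G - v` connected, so attaching `v` to a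
spanning tree of `G - v` through `a`, respectively `b`, gives spanning trees `T` and
`T - a + b`; recombining their cotrees along `A` gives the cotree of `T + b`, which is not a
tree. Every variable occurs because no edge is a bridge.
-/

namespace MvPolynomial

variable {σ : Type*}

theorem disjoint_vars_of_degreeOf_mul_le_one {R : Type*} [CommSemiring R] [NoZeroDivisors R]
    {F H : MvPolynomial σ R} (hF : F ≠ 0) (hH : H ≠ 0) (h : ∀ i, degreeOf i (F * H) ≤ 1) :
    Disjoint F.vars H.vars := by
  refine Finset.disjoint_left.2 fun i hiF hiH => ?_
  have := h i
  rw [degreeOf_mul_eq hF hH] at this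
  rw [mem_vars_iff_degreeOf_ne_zero] at hiF hiH
  omega

theorem coeff_mul_of_disjoint_vars {R : Type*} [CommSemiring R] [DecidableEq σ]
    {F H : MvPolynomial σ R} (h : Disjoint F.vars H.vars) (m : σ →₀ ℕ) :
    coeff m (F * H) = coeff (m.filter (· ∈ F.vars)) F * coeff (m.filter (· ∉ F.vars)) H := by
  rw [coeff_mul]
  refine Finset.sum_eq_single_of_mem (m.filter (· ∈ F.vars), m.filter (· ∉ F.vars)) (by simp)
    ?_
  rintro ⟨d₁, d₂⟩ hd hne
  by_contra hcoeff
  have hd₁ : d₁ ∈ F.support := mem_support_iff.2 (left_ne_zero_of_mul hcoeff)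
  have hd₂ : d₂ ∈ H.support := mem_support_iff.2 (right_ne_zero_of_mul hcoeff)
  have hd : ∀ i, d₁ i + d₂ i = m i := fun i => by
    rw [← Finsupp.add_apply, Finset.HasAntidiagonal.mem_antidiagonal.1 hd]
  have h₁ : ∀ i ∉ F.vars, d₁ i = 0 := fun i hi => mem_support_notMem_vars_zero hd₁ hi
  have h₂ : ∀ i ∈ F.vars, d₂ i = 0 := fun i hi =>
    mem_support_notMem_vars_zero hd₂ (Finset.disjoint_left.1 h hi)
  refine hne (Prod.ext (Finsupp.ext fun i => ?_) (Finsupp.ext fun i => ?_)) <;>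
    by_cases hi : i ∈ F.vars <;> simp [hi, h₁, h₂, ← hd i]

variable {K : Type*} [Field K]

theorem vars_nonempty_of_not_isUnit {F : MvPolynomial σ K} (hF : F ≠ 0) (hu : ¬ IsUnit F) :
    F.vars.Nonempty := by
  by_contra h
  rw [Finset.not_nonempty_iff_eq_empty, vars_eq_empty_iff_eq_C] at h
  refine hu (h ▸ (Ne.isUnit fun h0 => hF ?_).map C)
  rw [h, h0, map_zero]

theorem not_isUnit_of_vars_nonempty {F : MvPolynomial σ K} (h : F.vars.Nonempty) :
    ¬ IsUnit F := by
  rw [isUnit_iff_eq_C_of_isReduced]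
  rintro ⟨r, -, rfl⟩
  simp at h

theorem irreducible_of_forall_exists_notMem_support [DecidableEq σ] {P : MvPolynomial σ K}
    (hvars : P.vars.Nonempty) (hlin : ∀ i, degreeOf i P ≤ 1)
    (hmix : ∀ A : Finset σ, (∃ a ∈ A, a ∈ P.vars) → (∃ b ∉ A, b ∈ P.vars) →
      ∃ m ∈ P.support, ∃ m' ∈ P.support,
        m.filter (· ∈ A) + m'.filter (· ∉ A) ∉ P.support) :
    Irreducible P := by
  refine ⟨not_isUnit_of_vars_nonempty hvars, fun F H hP => ?_⟩
  have hP0 : P ≠ 0 := by rintro rfl; simp at hvars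
  have hF : F ≠ 0 := by rintro rfl; simp [hP] at hP0
  have hH : H ≠ 0 := by rintro rfl; simp [hP] at hP0
  by_contra! hu
  subst hP
  have hdisj := disjoint_vars_of_degreeOf_mul_le_one hF hH hlin
  have hvars_mul : ∀ i, i ∈ F.vars ∨ i ∈ H.vars → i ∈ (F * H).vars := fun i hi => by
    simp only [mem_vars_iff_degreeOf_ne_zero, degreeOf_mul_eq hF hH] at hi ⊢
    omega
  obtain ⟨a, ha⟩ := vars_nonempty_of_not_isUnit hF hu.1
  obtain ⟨b, hb⟩ := vars_nonempty_of_not_isUnit hH hu.2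
  obtain ⟨m, hm, m', hm', hmix⟩ := hmix F.vars ⟨a, ha, hvars_mul a (Or.inl ha)⟩
    ⟨b, Finset.disjoint_right.1 hdisj hb, hvars_mul b (Or.inr hb)⟩
  simp only [mem_support_iff, coeff_mul_of_disjoint_vars hdisj] at hm hm' hmix
  have hfilter : ∀ (p : σ → Prop) [DecidablePred p],
      (m.filter p + m'.filter (¬ p ·)).filter p = m.filter p ∧
        (m.filter p + m'.filter (¬ p ·)).filter (¬ p ·) = m'.filter (¬ p ·) := by
    intro p _
    constructor <;> ext i <;> by_cases hi : p i <;> simp [hi]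
  rw [(hfilter _).1, (hfilter _).2] at hmix
  exact hmix (mul_ne_zero (left_ne_zero_of_mul hm) (right_ne_zero_of_mul hm'))

end MvPolynomial

namespace Multigraph

open Relation

variable {V E : Type} {G : Multigraph V E}

def edgesAvoiding (G : Multigraph V E) (v : V) : Set E :=
  {e | G.fst e ≠ v ∧ G.snd e ≠ v}

theorem Adj.symm {S : Set E} {u v : V} (h : G.Adj S u v) : G.Adj S v u := by
  obtain ⟨e, he, h | h⟩ := h
  exacts [⟨e, he, Or.inr h⟩, ⟨e, he, Or.inl h⟩]

instance (S : Set E) : Std.Symm (G.Adj S) := ⟨fun _ _ => Adj.symm⟩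

theorem reflTransGen_adj_symm {S : Set E} {u v : V} (h : ReflTransGen (G.Adj S) u v) :
    ReflTransGen (G.Adj S) v u :=
  symm h

theorem reflTransGen_adj_mono {S S' : Set E} (h : S ⊆ S') {u v : V}
    (huv : ReflTransGen (G.Adj S) u v) : ReflTransGen (G.Adj S') u v :=
  ReflTransGen.mono (fun _ _ ⟨e, he, hends⟩ => ⟨e, h he, hends⟩) _ _ huv

theorem eq_of_reflTransGen_of_subset_edgesAvoiding {S : Set E} {v x : V}
    (hS : S ⊆ G.edgesAvoiding v) (h : ReflTransGen (G.Adj S) v x) : x = v := by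
  induction h with
  | refl => rfl
  | tail _ hstep ih =>
    subst ih
    obtain ⟨e, he, ⟨h, -⟩ | ⟨-, h⟩⟩ := hstep
    exacts [absurd h (hS he).1, absurd h (hS he).2]

theorem reflTransGen_diff_singleton_fst_or_snd {S : Set E} {e : E} {x : V}
    (h : ReflTransGen (G.Adj S) x (G.fst e)) :
    ReflTransGen (G.Adj (S \ {e})) x (G.fst e) ∨
      ReflTransGen (G.Adj (S \ {e})) x (G.snd e) := by
  induction h using ReflTransGen.head_induction_on with
  | refl => exact Or.inl .refl
  | head hstep _ ih =>
    obtain ⟨f, hf, hends⟩ := hstep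
    by_cases hfe : f = e
    · subst hfe
      rcases hends with ⟨h, -⟩ | ⟨-, h⟩
      exacts [Or.inl (h ▸ .refl), Or.inr (h ▸ .refl)]
    · exact ih.imp (.head ⟨f, ⟨hf, hfe⟩, hends⟩) (.head ⟨f, ⟨hf, hfe⟩, hends⟩)

theorem connOn_diff_singleton_iff {S : Set E} (hS : G.ConnOn S) (e : E) :
    G.ConnOn (S \ {e}) ↔ ReflTransGen (G.Adj (S \ {e})) (G.fst e) (G.snd e) := by
  refine ⟨fun h => h _ _, fun h => ?_⟩
  have hub : ∀ x, ReflTransGen (G.Adj (S \ {e})) x (G.fst e) := fun x =>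
    (reflTransGen_diff_singleton_fst_or_snd (hS x _)).elim id
      (·.trans (reflTransGen_adj_symm h))
  exact fun x y => (hub x).trans (reflTransGen_adj_symm (hub y))

theorem isSpanningTree_iff [DecidableEq E] {T : Finset E} :
    G.IsSpanningTree T ↔
      G.ConnOn T ∧ ∀ e ∈ T, ¬ ReflTransGen (G.Adj (↑T \ {e})) (G.fst e) (G.snd e) := by
  refine and_congr_right fun hT => forall₂_congr fun e _ => ?_
  rw [Finset.coe_erase, connOn_diff_singleton_iff hT]

theorem exists_isSpanningTree_subset [DecidableEq E] {S : Finset E} (hS : G.ConnOn S) :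
    ∃ T ⊆ S, G.IsSpanningTree T := by
  induction S using Finset.strongInduction with
  | _ S ih =>
    by_cases h : ∃ e ∈ S, G.ConnOn ↑(S.erase e)
    · obtain ⟨e, he, hconn⟩ := h
      obtain ⟨T, hTS, hT⟩ := ih _ (Finset.erase_ssubset he) hconn
      exact ⟨T, hTS.trans (Finset.erase_subset _ _), hT⟩
    · push Not at h
      exact ⟨S, subset_rfl, hS, h⟩

section Pendant

variable {S : Set E} {c : E} {v w : V}

-- Collapsing the pendant edge `c` onto `w` turns a walk between vertices `≠ v` into one
-- avoiding `c`.
theorem reflTransGen_insert_iff_of_pendant (hc : G.Adj {c} v w) (hvw : v ≠ w)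
    (hS : S ⊆ G.edgesAvoiding v) {x y : V} (hx : x ≠ v) (hy : y ≠ v) :
    ReflTransGen (G.Adj (insert c S)) x y ↔ ReflTransGen (G.Adj S) x y := by
  classical
  refine ⟨fun h => ?_, reflTransGen_adj_mono (Set.subset_insert c S)⟩
  let f : V → V := fun z => if z = v then w else z
  suffices ReflTransGen (G.Adj S) (f x) (f y) by simpa [f, hx, hy] using this
  refine ReflTransGen.lift' f (fun a b hab => ?_) _ _ h
  change ReflTransGen (G.Adj S) (f a) (f b)
  obtain ⟨e, rfl | he, hends⟩ := hab
  · obtain ⟨_, rfl, hcvw⟩ := hc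
    have hfa : f a = f b := by
      simp only [f]
      grind
    exact hfa ▸ .refl
  · have hav : a ≠ v ∧ b ≠ v := by
      rcases hends with ⟨rfl, rfl⟩ | ⟨rfl, rfl⟩
      exacts [hS he, (hS he).symm]
    simpa [f, hav.1, hav.2] using ReflTransGen.single ⟨e, he, hends⟩

theorem connOn_insert_iff_of_pendant (hc : G.Adj {c} v w) (hvw : v ≠ w)
    (hS : S ⊆ G.edgesAvoiding v) :
    G.ConnOn (insert c S) ↔ ∀ x y, x ≠ v → y ≠ v → ReflTransGen (G.Adj S) x y := by
  refine ⟨fun h x y hx hy => (reflTransGen_insert_iff_of_pendant hc hvw hS hx hy).1 (h x y),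
    fun h => ?_⟩
  have hub : ∀ x, ReflTransGen (G.Adj (insert c S)) x w := by
    intro x
    by_cases hx : x = v
    · obtain ⟨_, rfl, hends⟩ := hc
      exact hx ▸ .single ⟨_, Set.mem_insert _ S, hends⟩
    · exact reflTransGen_adj_mono (Set.subset_insert c S) (h x w hx hvw.symm)
  exact fun x y => (hub x).trans (reflTransGen_adj_symm (hub y))

theorem isSpanningTree_insert_iff_of_pendant [DecidableEq E] {T : Finset E}
    (hc : G.Adj {c} v w) (hvw : v ≠ w) (hT : ↑T ⊆ G.edgesAvoiding v) (hcT : c ∉ T) :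
    G.IsSpanningTree (insert c T) ↔
      (∀ x y, x ≠ v → y ≠ v → ReflTransGen (G.Adj T) x y) ∧
        ∀ e ∈ T, ¬ ReflTransGen (G.Adj (↑T \ {e})) (G.fst e) (G.snd e) := by
  rw [isSpanningTree_iff, Finset.coe_insert, connOn_insert_iff_of_pendant hc hvw hT,
    Finset.forall_mem_insert, Set.insert_sdiff_self_of_notMem (Finset.mem_coe.not.2 hcT)]
  have hc_cut : ¬ ReflTransGen (G.Adj T) (G.fst c) (G.snd c) := by
    obtain ⟨_, rfl, ⟨rfl, rfl⟩ | ⟨rfl, rfl⟩⟩ := hc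
    · exact fun h => hvw (eq_of_reflTransGen_of_subset_edgesAvoiding hT h).symm
    · exact fun h => hvw (eq_of_reflTransGen_of_subset_edgesAvoiding hT
        (reflTransGen_adj_symm h)).symm
  refine and_congr_right fun _ => ?_
  simp only [hc_cut, not_false_eq_true, true_and]
  refine forall₂_congr fun e he => not_congr ?_
  have hce : c ∉ ({e} : Set E) := fun h => hcT (h ▸ he)
  rw [Set.insert_sdiff_of_notMem _ hce]
  exact reflTransGen_insert_iff_of_pendant hc hvw (Set.sdiff_subset.trans hT)
    (hT he).1 (hT he).2

end Pendant

theorem exists_adj_singleton_of_not_isLoop {c : E} {v : V} (hc : ¬ G.IsLoop c)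
    (hcv : G.fst c = v ∨ G.snd c = v) : ∃ w, w ≠ v ∧ G.Adj {c} v w := by
  rcases hcv with rfl | rfl
  · exact ⟨G.snd c, Ne.symm hc, c, rfl, Or.inl ⟨rfl, rfl⟩⟩
  · exact ⟨G.fst c, hc, c, rfl, Or.inr ⟨rfl, rfl⟩⟩

theorem ConnectedGraph.vsupp_inter_vsupp_compl_nonempty (hG : G.ConnectedGraph) {A : Set E}
    {a b : E} (ha : a ∈ A) (hb : b ∉ A) : (G.vsupp A ∩ G.vsupp Aᶜ).Nonempty := by
  suffices ∀ y, ReflTransGen (G.Adj Set.univ) (G.fst a) y →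
      y ∈ G.vsupp A ∨ (G.vsupp A ∩ G.vsupp Aᶜ).Nonempty from
    (this _ (hG _ (G.fst b))).elim (fun h => ⟨_, h, b, hb, Or.inl rfl⟩) id
  intro y h
  induction h with
  | refl => exact Or.inl ⟨a, ha, Or.inl rfl⟩
  | @tail x y _ hstep ih =>
    refine ih.elim (fun hx => ?_) Or.inr
    obtain ⟨g, -, hends⟩ := hstep
    by_cases hg : g ∈ A
    · rcases hends with ⟨-, h⟩ | ⟨h, -⟩
      exacts [Or.inl ⟨g, hg, Or.inr h⟩, Or.inl ⟨g, hg, Or.inl h⟩]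
    · rcases hends with ⟨h, -⟩ | ⟨-, h⟩
      exacts [Or.inr ⟨x, hx, g, hg, Or.inl h⟩, Or.inr ⟨x, hx, g, hg, Or.inr h⟩]

namespace Biconnected

theorem reflTransGen_edgesAvoiding (hbi : G.Biconnected) {v x y : V} (hx : x ≠ v)
    (hy : y ≠ v) : ReflTransGen (G.Adj (G.edgesAvoiding v)) x y := by
  refine ReflTransGen.mono (fun a b ⟨ha, hb, e, _, hends⟩ => ⟨e, ?_, hends⟩) _ _
    (hbi.2 v x y hx hy)
  rcases hends with ⟨rfl, rfl⟩ | ⟨rfl, rfl⟩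
  exacts [⟨ha, hb⟩, ⟨hb, ha⟩]

theorem reflTransGen_fst_snd_compl_singleton (hbi : G.Biconnected)
    (hloop : ∀ e, ¬ G.IsLoop e) {e f : E} (hfe : f ≠ e) :
    ReflTransGen (G.Adj {e}ᶜ) (G.fst e) (G.snd e) := by
  have avoid : ∀ {u}, (G.fst e = u ∨ G.snd e = u) → G.edgesAvoiding u ⊆ {e}ᶜ := by
    rintro u hu _ ⟨h1, h2⟩ rfl
    exact hu.elim h1 h2
  have via : ∀ z, z ≠ G.fst e → z ≠ G.snd e →
      ReflTransGen (G.Adj {e}ᶜ) (G.fst e) (G.snd e) := fun z h1 h2 =>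
      (reflTransGen_adj_mono (avoid (Or.inr rfl))
        (hbi.reflTransGen_edgesAvoiding (hloop e) h2)).trans
      (reflTransGen_adj_mono (avoid (Or.inl rfl))
        (hbi.reflTransGen_edgesAvoiding h1 fun h => hloop e h.symm))
  by_cases h1 : G.fst f = G.fst e ∨ G.fst f = G.snd e
  · by_cases h2 : G.snd f = G.fst e ∨ G.snd f = G.snd e
    · have hf := hloop f
      unfold IsLoop at hf
      rcases h1 with h1 | h1 <;> rcases h2 with h2 | h2
      · exact absurd (h1.trans h2.symm) hf
      · exact .single ⟨f, hfe, Or.inl ⟨h1, h2⟩⟩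
      · exact .single ⟨f, hfe, Or.inr ⟨h1, h2⟩⟩
      · exact absurd (h1.trans h2.symm) hf
    · push Not at h2
      exact via _ h2.1 h2.2
  · push Not at h1
    exact via _ h1.1 h1.2

theorem exists_isSpanningTree_notMem [Fintype E] [DecidableEq E] (hbi : G.Biconnected)
    (hloop : ∀ e, ¬ G.IsLoop e) {e f : E} (hfe : f ≠ e) :
    ∃ T, G.IsSpanningTree T ∧ e ∉ T := by
  have hconn : G.ConnOn ↑(Finset.univ.erase e) := by
    rw [Finset.coe_erase, Finset.coe_univ, connOn_diff_singleton_iff hbi.1,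
      ← Set.compl_eq_univ_sdiff]
    exact hbi.reflTransGen_fst_snd_compl_singleton hloop hfe
  obtain ⟨T, hT, hTtree⟩ := exists_isSpanningTree_subset hconn
  exact ⟨T, hTtree, fun he => Finset.notMem_erase e _ (hT he)⟩

-- `T` is a spanning tree of `G - v` with `v` attached through `a`; attach `v` through `b`
-- instead.
theorem exists_isSpanningTree_exchange [Fintype E] [DecidableEq E] (hbi : G.Biconnected)
    (hloop : ∀ e, ¬ G.IsLoop e) {a b : E} (hab : a ≠ b) {v : V}
    (hav : G.fst a = v ∨ G.snd a = v) (hbv : G.fst b = v ∨ G.snd b = v) :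
    ∃ T, G.IsSpanningTree T ∧ a ∈ T ∧ b ∉ T ∧
      G.IsSpanningTree (insert b (T.erase a)) := by
  classical
  obtain ⟨u, hu, hau⟩ := exists_adj_singleton_of_not_isLoop (hloop a) hav
  obtain ⟨w, hw, hbw⟩ := exists_adj_singleton_of_not_isLoop (hloop b) hbv
  have hconn : G.ConnOn ↑(insert a (G.edgesAvoiding v).toFinset) := by
    rw [Finset.coe_insert, Set.coe_toFinset, connOn_insert_iff_of_pendant hau hu.symm
      subset_rfl]
    exact fun x y hx hy => hbi.reflTransGen_edgesAvoiding hx hy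
  obtain ⟨T, hTsub, hT⟩ := exists_isSpanningTree_subset hconn
  have hTa : ↑(T.erase a) ⊆ G.edgesAvoiding v := fun e he => by
    have := hTsub (Finset.mem_of_mem_erase he)
    simp only [Finset.mem_insert, Set.mem_toFinset] at this
    exact this.resolve_left (Finset.ne_of_mem_erase he)
  have haT : a ∈ T := by
    by_contra haT
    rw [← Finset.erase_eq_of_notMem haT] at hT
    exact hu (eq_of_reflTransGen_of_subset_edgesAvoiding hTa (hT.1 v u))
  have hbT : b ∉ T := fun hbT => by
    have := hTsub hbT
    simp only [Finset.mem_insert, Set.mem_toFinset] at this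
    rcases this with rfl | ⟨h1, h2⟩
    exacts [hab rfl, hbv.elim h1 h2]
  have htree := (isSpanningTree_insert_iff_of_pendant hau hu.symm hTa
    (Finset.notMem_erase a T)).1 (by rwa [Finset.insert_erase haT])
  exact ⟨T, hT, haT, hbT, (isSpanningTree_insert_iff_of_pendant hbw hw.symm hTa
    (fun h => hbT (Finset.mem_of_mem_erase h))).2 htree⟩

end Biconnected

section Kirchhoff

open MvPolynomial

variable [Fintype E] [DecidableEq E]

noncomputable def cotreeExponent (T : Finset E) : E →₀ ℕ :=
  ∑ e ∈ Tᶜ, Finsupp.single e 1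

theorem cotreeExponent_apply (T : Finset E) (e : E) :
    cotreeExponent T e = if e ∈ T then 0 else 1 := by
  by_cases he : e ∈ T <;>
    simp [cotreeExponent, Finsupp.finsetSum_apply, Finsupp.single_apply, he]

theorem cotreeExponent_injective : Function.Injective (cotreeExponent (E := E)) := by
  intro T U h
  ext e
  have := DFunLike.congr_fun h e
  rw [cotreeExponent_apply, cotreeExponent_apply] at this
  split_ifs at this <;> simp_all

theorem mem_support_kirchhoff_iff {m : E →₀ ℕ} :
    m ∈ G.kirchhoff.support ↔ ∃ T, G.IsSpanningTree T ∧ cotreeExponent T = m := by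
  have hprod : ∀ T : Finset E, ∏ e ∈ Tᶜ, (X e : MvPolynomial E ℚ) =
      monomial (cotreeExponent T) 1 := fun T => (monomial_sum_one _ _).symm
  simp [kirchhoff, hprod, coeff_sum, apply_ite (coeff m), coeff_monomial, ← ite_and]

theorem degreeOf_kirchhoff_le_one (e : E) : G.kirchhoff.degreeOf e ≤ 1 := by
  rw [degreeOf_le_iff]
  intro m hm
  obtain ⟨T, -, rfl⟩ := mem_support_kirchhoff_iff.1 hm
  rw [cotreeExponent_apply]
  split_ifs <;> simp

theorem degreeOf_kirchhoff_eq_one {T : Finset E} (hT : G.IsSpanningTree T) {e : E}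
    (he : e ∉ T) : G.kirchhoff.degreeOf e = 1 := by
  refine (degreeOf_kirchhoff_le_one e).antisymm ?_
  have := monomial_le_degreeOf e (mem_support_kirchhoff_iff.2 ⟨T, hT, rfl⟩)
  rwa [cotreeExponent_apply, if_neg he] at this

theorem Biconnected.exists_mem_support_kirchhoff_notMem (hbi : G.Biconnected)
    (hloop : ∀ e, ¬ G.IsLoop e) {A : Finset E} {e₁ e₂ : E} (h₁ : e₁ ∈ A)
    (h₂ : e₂ ∉ A) :
    ∃ m ∈ G.kirchhoff.support, ∃ m' ∈ G.kirchhoff.support,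
      m.filter (· ∈ A) + m'.filter (· ∉ A) ∉ G.kirchhoff.support := by
  obtain ⟨v, ⟨a, ha, hav⟩, b, hb, hbv⟩ :=
    hbi.1.vsupp_inter_vsupp_compl_nonempty (A := (A : Set E)) h₁ h₂
  have hab : a ≠ b := fun h => hb (h ▸ ha)
  obtain ⟨T, hT, haT, hbT, hT'⟩ := hbi.exists_isSpanningTree_exchange hloop hab hav hbv
  refine ⟨_, mem_support_kirchhoff_iff.2 ⟨T, hT, rfl⟩,
    _, mem_support_kirchhoff_iff.2 ⟨_, hT', rfl⟩, ?_⟩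
  rintro hmix
  obtain ⟨U, hU, hUeq⟩ := mem_support_kirchhoff_iff.1 hmix
  obtain rfl : U = insert b T := cotreeExponent_injective <| hUeq.trans <| by
    ext e
    by_cases heA : e ∈ A
    · have heb : e ≠ b := fun h => hb (h ▸ heA)
      simp [cotreeExponent_apply, heA, heb]
    · have hea : e ≠ a := fun h => heA (h ▸ ha)
      simp [cotreeExponent_apply, heA, hea]
  exact hU.2 b (Finset.mem_insert_self b T) (by rw [Finset.erase_insert hbT]; exact hT.1)

end Kirchhoff

end Multigraph

open Multigraph MvPolynomial in
/-- The Kirchhoff polynomial of a biconnected loopless multigraph other than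
`K₂` (which, being loopless and biconnected, means it has an edge and more than
one edge) is irreducible over ℚ and non-constant in every edge variable. -/
theorem kirchhoff_biconnected_irreducible {V E : Type} [Fintype E] [DecidableEq E]
    (G : Multigraph V E) (hbi : G.Biconnected)
    (hloopless : ∀ e : E, ¬ G.IsLoop e)
    (hEdge : Nonempty E) (hK2 : Fintype.card E ≠ 1) :
    Irreducible G.kirchhoff ∧ ∀ e : E, G.kirchhoff.degreeOf e ≠ 0 := by
  have hcard : 1 < Fintype.card E := by
    have := Fintype.card_pos_iff.2 hEdge
    omega
  have hdeg : ∀ e, G.kirchhoff.degreeOf e = 1 := fun e => by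
    obtain ⟨f, hfe⟩ := Fintype.exists_ne_of_one_lt_card hcard e
    obtain ⟨T, hT, heT⟩ := hbi.exists_isSpanningTree_notMem hloopless hfe
    exact degreeOf_kirchhoff_eq_one hT heT
  have hvars : ∀ e, e ∈ G.kirchhoff.vars := fun e => by
    simp [mem_vars_iff_degreeOf_ne_zero, hdeg]
  refine ⟨irreducible_of_forall_exists_notMem_support ⟨_, hvars hEdge.some⟩
    (fun e => (hdeg e).le) ?_, fun e => by simp [hdeg]⟩
  rintro A ⟨a, ha, -⟩ ⟨b, hb, -⟩
  exact hbi.exists_mem_support_kirchhoff_notMem hloopless ha hb
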